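/- arXiv:2511.17778 — 2 statements merged into one kernel-verified Lean document; each statement's English description precedes it below -/
import Mathlib

section
/- Let r ≥ 1 be an integer, q a positive integer, and B a real number with 2 ≤ B < √q. Define, for integers b₁,…,b_{2r}, A_j = ∏_{i≠j} (b_i − b_j). Then the sum over all tuples (b₁,…,b_{2r}) with 1 ≤ b_i ≤ B of min{gcd(A_j, q) : 1 ≤ j ≤ 2r, A_j ≠ 0} (interpreting the minimum over an empty set as 0) is at most 2r·(τ(q)/2)^{2r−1}·B^{2r}. -/
/-- `Aprod b j = ∏_{i ≠ j} (b i - b j)`. -/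
def Aprod {m : ℕ} (b : Fin m → ℤ) (j : Fin m) : ℤ :=
  ∏ i ∈ Finset.univ.filter fun i => i ≠ j, (b i - b j)

/-- `min { gcd(A_j, q) : A_j ≠ 0 }`, interpreted as `0` if all `A_j` vanish. -/
def minGcd {m : ℕ} (b : Fin m → ℤ) (q : ℕ) : ℕ :=
  if h : (Finset.univ.filter fun j : Fin m => Aprod b j ≠ 0).Nonempty then
    ((Finset.univ.filter fun j : Fin m => Aprod b j ≠ 0).image
        fun j => Int.gcd (Aprod b j) q).min' (h.image _)
  else 0

/-!
If `A_j ≠ 0`, then `gcd(A_j, q) ≤ ∏_{i ≠ j} gcd(b_i - b_j, q)`; bounding the minimum by the sum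
over `j` of these products (with a factor `0` when `b_i = b_j`, since `gcd(0, q) = q`), the sum
over tuples with `b_j = y` factorises into the `(2r - 1)`-th power of `∑_{x ≠ y} gcd(x - y, q)`.
Each value `d = gcd(x - y, q)` there is a divisor of `q` with `d ≤ |x - y| < B < √q`, taken by at
most `(⌊B⌋ - 1) / d` values of `x`, and at most half of the divisors of `q` lie below `√q`.
-/

open Finset

theorem gcd_prod_dvd_prod_gcd {ι α : Type*} [CommMonoidWithZero α] [GCDMonoid α]
    (k : α) (s : Finset ι) (f : ι → α) :
    gcd k (∏ i ∈ s, f i) ∣ ∏ i ∈ s, gcd k (f i) := by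
  classical
  induction s using Finset.induction_on with
  | empty => exact (gcd_one_right' k).dvd
  | insert a s ha ih =>
    rw [prod_insert ha, prod_insert ha]
    exact (gcd_mul_dvd_mul_gcd k _ _).trans (mul_dvd_mul_left _ ih)

theorem Int.gcd_prod_le_prod_gcd {ι : Type*} (s : Finset ι) (f : ι → ℤ) (q : ℤ)
    (hf : ∀ i ∈ s, f i ≠ 0) :
    Int.gcd (∏ i ∈ s, f i) q ≤ ∏ i ∈ s, Int.gcd (f i) q := by
  refine Nat.le_of_dvd (prod_pos fun i hi => Int.gcd_pos_of_ne_zero_left q (hf i hi)) ?_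
  rw [← Int.natCast_dvd_natCast, Int.gcd_comm, Int.coe_gcd, Nat.cast_prod]
  simpa only [Int.gcd_comm _ q, Int.coe_gcd] using gcd_prod_dvd_prod_gcd q s f

theorem minGcd_le_gcd_Aprod {m : ℕ} (b : Fin m → ℤ) (q : ℕ) {j : Fin m} (hj : Aprod b j ≠ 0) :
    minGcd b q ≤ Int.gcd (Aprod b j) q := by
  have hmem : j ∈ univ.filter fun j => Aprod b j ≠ 0 := by simpa using hj
  rw [minGcd, dif_pos ⟨j, hmem⟩]
  exact min'_le _ _ (mem_image_of_mem _ hmem)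

theorem minGcd_le_sum_prod_gcd {m : ℕ} (b : Fin m → ℤ) (q : ℕ) :
    minGcd b q ≤
      ∑ j, ∏ i ∈ univ.erase j, if b i = b j then 0 else Int.gcd (b i - b j) q := by
  by_cases h : ∃ j, Aprod b j ≠ 0
  · obtain ⟨j, hj⟩ := h
    have hne : ∀ i ∈ univ.erase j, b i - b j ≠ 0 := fun i hi hzero =>
      hj (prod_eq_zero (by simpa [filter_ne'] using hi) hzero)
    calc minGcd b q ≤ Int.gcd (Aprod b j) q := minGcd_le_gcd_Aprod b q hj
      _ ≤ ∏ i ∈ univ.erase j, Int.gcd (b i - b j) q := by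
        rw [Aprod, filter_ne']
        exact Int.gcd_prod_le_prod_gcd _ _ _ hne
      _ = ∏ i ∈ univ.erase j, if b i = b j then 0 else Int.gcd (b i - b j) q :=
        prod_congr rfl fun i hi => (if_neg (sub_ne_zero.mp (hne i hi))).symm
      _ ≤ _ := single_le_sum_of_canonicallyOrdered
        (f := fun j => ∏ i ∈ univ.erase j, if b i = b j then 0 else Int.gcd (b i - b j) q)
        (mem_univ j)
  · push Not at h
    simp [minGcd, h]

theorem sum_piFinset_prod_erase {ι α R : Type*} [Fintype ι] [DecidableEq ι] [DecidableEq α]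
    [CommSemiring R] (s : Finset α) (f : α → α → R) (j : ι) :
    ∑ b ∈ Fintype.piFinset (fun _ : ι => s), ∏ i ∈ univ.erase j, f (b i) (b j) =
      ∑ y ∈ s, (∑ x ∈ s, f x y) ^ (Fintype.card ι - 1) := by
  let g (y : α) (i : ι) (x : α) : R := if i = j then (if x = y then 1 else 0) else f x y
  have hg_ne (y : α) : ∀ i ∈ univ.erase j, g y i = fun x => f x y := fun i hi =>
    funext fun _ => if_neg (ne_of_mem_erase hi)
  have hg_prod (y : α) (b : ι → α) :
      ∏ i, g y i (b i) = (if b j = y then 1 else 0) * ∏ i ∈ univ.erase j, f (b i) y := by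
    rw [← mul_prod_erase univ _ (mem_univ j), prod_congr rfl fun i hi => congrFun (hg_ne y i hi) _]
    simp only [g, if_pos rfl]
  calc ∑ b ∈ Fintype.piFinset (fun _ : ι => s), ∏ i ∈ univ.erase j, f (b i) (b j)
      = ∑ b ∈ Fintype.piFinset (fun _ : ι => s), ∑ y ∈ s, ∏ i, g y i (b i) := by
        refine sum_congr rfl fun b hb => ?_
        simp only [hg_prod, ite_mul, one_mul, zero_mul, sum_ite_eq, Fintype.mem_piFinset.mp hb j,
          if_true]
    _ = ∑ y ∈ s, ∏ i, ∑ x ∈ s, g y i x := by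
        rw [sum_comm]
        exact sum_congr rfl fun y _ => (prod_univ_sum _ _).symm
    _ = ∑ y ∈ s, (∑ x ∈ s, f x y) ^ (Fintype.card ι - 1) := by
        refine sum_congr rfl fun y hy => ?_
        rw [← mul_prod_erase univ _ (mem_univ j), prod_congr rfl fun i hi => by rw [hg_ne y i hi],
          prod_const, card_erase_of_mem (mem_univ j), card_univ]
        simp only [g, if_pos rfl, sum_ite_eq', hy, if_true, one_mul]

theorem Nat.sum_Ioc_gcd_le (q L : ℕ) (hq : q ≠ 0) :
    ∑ k ∈ Ioc 0 L, Nat.gcd k q ≤ #{d ∈ q.divisors | d ≤ L} * L := by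
  have hmaps : ∀ k ∈ Ioc 0 L, Nat.gcd k q ∈ {d ∈ q.divisors | d ≤ L} := fun k hk => by
    rw [mem_Ioc] at hk
    simpa [hq] using ⟨Nat.gcd_dvd_right k q, (Nat.gcd_le_left q hk.1).trans hk.2⟩
  rw [← sum_fiberwise_of_maps_to hmaps, ← smul_eq_mul, ← sum_const]
  refine sum_le_sum fun d hd => ?_
  have hfiber : {k ∈ Ioc 0 L | Nat.gcd k q = d} ⊆ {k ∈ Ioc 0 L | d ∣ k} :=
    monotone_filter_right _ fun k _ hk => hk ▸ Nat.gcd_dvd_left k q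
  calc ∑ k ∈ Ioc 0 L with Nat.gcd k q = d, Nat.gcd k q
      = #{k ∈ Ioc 0 L | Nat.gcd k q = d} * d := sum_const_nat fun k hk => (mem_filter.mp hk).2
    _ ≤ #{k ∈ Ioc 0 L | d ∣ k} * d := Nat.mul_le_mul_right d (card_le_card hfiber)
    _ ≤ L := by rw [Nat.Ioc_filter_dvd_card_eq_div]; exact Nat.div_mul_le_self L d

theorem Nat.two_mul_card_divisors_le_of_mul_self_lt {q L : ℕ} (h : L * L < q) :
    2 * #{d ∈ q.divisors | d ≤ L} ≤ #q.divisors := by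
  have hq : q ≠ 0 := by omega
  have hcompl : #{d ∈ q.divisors | d ≤ L} ≤ #{d ∈ q.divisors | ¬d ≤ L} := by
    refine card_le_card_of_injOn (q / ·) (fun d hd => ?_) (fun a ha b hb hab => ?_)
    · simp only [coe_filter, Set.mem_ofPred_eq, Nat.mem_divisors] at hd ⊢
      refine ⟨⟨Nat.div_dvd_of_dvd hd.1.1, hq⟩, fun hle => ?_⟩
      have : q ≤ L * L := calc
        q = d * (q / d) := (Nat.mul_div_cancel' hd.1.1).symm
        _ ≤ L * L := Nat.mul_le_mul hd.2 hle
      omega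
    · simp only [coe_filter, Set.mem_ofPred_eq, Nat.mem_divisors] at ha hb
      rw [← Nat.div_div_self ha.1.1 hq, ← Nat.div_div_self hb.1.1 hq]
      exact congrArg (q / ·) hab
  have := card_filter_add_card_filter_not (s := q.divisors) (· ≤ L)
  omega

theorem sum_Icc_ite_natAbs_sub {M : Type*} [AddCommMonoid M] (F : ℕ → M) {N n : ℕ}
    (hn : n ∈ Icc 1 N) :
    ∑ x ∈ Icc (1 : ℤ) N, (if x = n then 0 else F (x - n).natAbs) =
      ∑ k ∈ Ioc 0 (n - 1), F k + ∑ k ∈ Ioc 0 (N - n), F k := by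
  rw [mem_Icc] at hn
  have hsplit (x : ℤ) : (if x = n then 0 else F (x - n).natAbs) =
      (if x < n then F (x - n).natAbs else 0) + (if (n : ℤ) < x then F (x - n).natAbs else 0) := by
    split_ifs <;> first | omega | simp
  simp only [hsplit, sum_add_distrib, ← sum_filter]
  congr 1
  · refine sum_nbij' (fun x => (x - n).natAbs) (fun k => n - k) ?_ ?_ ?_ ?_ fun _ _ => rfl <;>
      intro x hx <;> simp only [mem_filter, mem_Icc, mem_Ioc] at hx ⊢ <;> omega
  · refine sum_nbij' (fun x => (x - n).natAbs) (fun k => n + k) ?_ ?_ ?_ ?_ fun _ _ => rfl <;>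
      intro x hx <;> simp only [mem_filter, mem_Icc, mem_Ioc] at hx ⊢ <;> omega

theorem sum_Icc_gcd_sub_le (q N : ℕ) (hq : q ≠ 0) {y : ℤ} (hy : y ∈ Icc (1 : ℤ) N) :
    ∑ x ∈ Icc (1 : ℤ) N, (if x = y then 0 else Int.gcd (x - y) q) ≤
      #{d ∈ q.divisors | d ≤ N - 1} * (N - 1) := by
  rw [mem_Icc] at hy
  obtain ⟨n, rfl⟩ : ∃ n : ℕ, y = n := ⟨y.toNat, by omega⟩
  have hn : n ∈ Icc 1 N := mem_Icc.mpr (by omega)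
  have hD (L : ℕ) (hL : L ≤ N - 1) : #{d ∈ q.divisors | d ≤ L} ≤ #{d ∈ q.divisors | d ≤ N - 1} :=
    card_le_card (monotone_filter_right _ fun _ _ hd => hd.trans hL)
  calc ∑ x ∈ Icc (1 : ℤ) N, (if x = n then 0 else Int.gcd (x - n) q)
      = ∑ k ∈ Ioc 0 (n - 1), Nat.gcd k q + ∑ k ∈ Ioc 0 (N - n), Nat.gcd k q :=
        sum_Icc_ite_natAbs_sub (Nat.gcd · q) hn
    _ ≤ #{d ∈ q.divisors | d ≤ n - 1} * (n - 1) + #{d ∈ q.divisors | d ≤ N - n} * (N - n) :=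
        add_le_add (Nat.sum_Ioc_gcd_le q _ hq) (Nat.sum_Ioc_gcd_le q _ hq)
    _ ≤ #{d ∈ q.divisors | d ≤ N - 1} * (n - 1) + #{d ∈ q.divisors | d ≤ N - 1} * (N - n) :=
        Nat.add_le_add (Nat.mul_le_mul_right _ (hD _ (by omega)))
          (Nat.mul_le_mul_right _ (hD _ (by omega)))
    _ = #{d ∈ q.divisors | d ≤ N - 1} * (N - 1) := by
        rw [← mul_add]; congr 1; omega

theorem sum_minGcd_le (m N q : ℕ) (hq : q ≠ 0) :
    ∑ b ∈ Fintype.piFinset fun _ : Fin m => Icc (1 : ℤ) N, minGcd b q ≤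
      m * N * (#{d ∈ q.divisors | d ≤ N - 1} * (N - 1)) ^ (m - 1) := by
  set S := Icc (1 : ℤ) N
  calc ∑ b ∈ Fintype.piFinset fun _ : Fin m => S, minGcd b q
      ≤ ∑ b ∈ Fintype.piFinset fun _ : Fin m => S,
          ∑ j, ∏ i ∈ univ.erase j, if b i = b j then 0 else Int.gcd (b i - b j) q :=
        sum_le_sum fun b _ => minGcd_le_sum_prod_gcd b q
    _ = ∑ _j : Fin m, ∑ y ∈ S, (∑ x ∈ S, if x = y then 0 else Int.gcd (x - y) q) ^ (m - 1) := by
        rw [sum_comm]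
        refine sum_congr rfl fun j _ => ?_
        simpa only [Fintype.card_fin] using
          sum_piFinset_prod_erase S (fun x y => if x = y then 0 else Int.gcd (x - y) q) j
    _ ≤ ∑ _j : Fin m, ∑ _y ∈ S, (#{d ∈ q.divisors | d ≤ N - 1} * (N - 1)) ^ (m - 1) := by
        gcongr with _ _ y hy
        exact sum_Icc_gcd_sub_le q N hq hy
    _ = m * N * (#{d ∈ q.divisors | d ≤ N - 1} * (N - 1)) ^ (m - 1) := by
        simp only [S, sum_const, card_univ, Fintype.card_fin, Int.card_Icc, smul_eq_mul,
          add_sub_cancel_right, Int.toNat_natCast, mul_assoc]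

theorem sum_minGcd_le_tau_pow (r q : ℕ) (hr : 1 ≤ r) (hq : 0 < q) (B : ℝ)
    (hB2 : 2 ≤ B) (hBq : B < Real.sqrt q) :
    ∑ b ∈ Fintype.piFinset fun _ : Fin (2 * r) => Finset.Icc (1 : ℤ) ⌊B⌋,
        (minGcd b q : ℝ)
      ≤ 2 * r * ((Nat.divisors q).card / 2 : ℝ) ^ (2 * r - 1) * B ^ (2 * r) := by
  have hB : 0 ≤ B := by linarith
  set N := ⌊B⌋₊
  set D := #{d ∈ q.divisors | d ≤ N - 1}
  have hNB : (N : ℝ) ≤ B := Nat.floor_le hB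
  have hN1B : ((N - 1 : ℕ) : ℝ) ≤ B := (Nat.cast_le.mpr (N.sub_le 1)).trans hNB
  have hD : (D : ℝ) ≤ (#q.divisors : ℝ) / 2 := by
    have hsq : (N - 1) * (N - 1) < q := by
      rw [← sq]
      exact_mod_cast (Real.lt_sqrt (Nat.cast_nonneg _)).mp (hN1B.trans_lt hBq)
    have := Nat.two_mul_card_divisors_le_of_mul_self_lt hsq
    rw [le_div_iff₀ two_pos]
    exact_mod_cast (by omega : D * 2 ≤ #q.divisors)
  rw [← Int.natCast_floor_eq_floor hB]
  calc ∑ b ∈ Fintype.piFinset fun _ : Fin (2 * r) => Icc (1 : ℤ) N, (minGcd b q : ℝ)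
      ≤ (2 * r : ℕ) * N * (D * (N - 1 : ℕ) : ℝ) ^ (2 * r - 1) := by
        exact_mod_cast sum_minGcd_le (2 * r) N q hq.ne'
    _ ≤ (2 * r : ℕ) * B * ((#q.divisors : ℝ) / 2 * B) ^ (2 * r - 1) := by
        gcongr
    _ = 2 * r * ((Nat.divisors q).card / 2 : ℝ) ^ (2 * r - 1) * B ^ (2 * r) := by
        rw [← pow_sub_one_mul (by omega : 2 * r ≠ 0) B]
        push_cast
        ring
end

section
/- For every real A ≥ 2 and integer N ≥ 2, ∑_{1 ≤ a₁ ≤ A} ∑_{1 ≤ a₂ ≤ A} gcd(a₁,a₂)/max{a₁,a₂} ≤ 2A·∑_{d ≤ A} φ(d)/d². -/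
/-!
Writing `gcd a b = ∑_{d ∣ gcd a b} φ d` and exchanging sums, the contribution of `d` is
`φ d / d` times `∑_{b₁, b₂ ≤ M/d} 1 / max b₁ b₂`. Bounding `1 / max b₁ b₂` by the sum of
`[b₂ ≤ b₁] / b₁` and its mirror image shows that this double sum is at most `2 M / d`.
-/

open Finset

namespace Nat

theorem Icc_filter_dvd_eq_map {d : ℕ} (hd : 0 < d) (M : ℕ) :
    {a ∈ Icc 1 M | d ∣ a} = (Icc 1 (M / d)).map ⟨(d * ·), mul_right_injective₀ hd.ne'⟩ := by
  ext a
  simp only [mem_filter, mem_Icc, mem_map, Function.Embedding.coeFn_mk]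
  constructor
  · rintro ⟨⟨ha, haM⟩, b, rfl⟩
    exact ⟨b, ⟨Nat.pos_of_mul_pos_left ha, (Nat.le_div_iff_mul_le hd).2 (by linarith)⟩, rfl⟩
  · rintro ⟨b, ⟨hb, hbM⟩, rfl⟩
    rw [Nat.le_div_iff_mul_le hd] at hbM
    exact ⟨⟨Nat.mul_pos hd hb, by linarith⟩, dvd_mul_right d b⟩

theorem sum_Icc_filter_dvd {R : Type*} [AddCommMonoid R] {d : ℕ} (hd : 0 < d) (M : ℕ)
    (f : ℕ → R) : ∑ a ∈ Icc 1 M with d ∣ a, f a = ∑ b ∈ Icc 1 (M / d), f (d * b) := by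
  rw [Icc_filter_dvd_eq_map hd, sum_map]
  rfl

theorem gcd_eq_sum_Icc_totient {a b M : ℕ} (ha : a ∈ Icc 1 M) :
    gcd a b = ∑ d ∈ Icc 1 M, if d ∣ a ∧ d ∣ b then φ d else 0 := by
  rw [mem_Icc] at ha
  have hg : gcd a b ≠ 0 := by simp [Nat.gcd_eq_zero_iff]; omega
  have hdiv : (gcd a b).divisors = {d ∈ Icc 1 M | d ∣ a ∧ d ∣ b} := by
    ext d
    simp only [mem_divisors, dvd_gcd_iff, mem_filter, mem_Icc, and_iff_left hg]
    constructor
    · rintro ⟨hda, hdb⟩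
      exact ⟨⟨Nat.pos_of_dvd_of_pos hda (by omega), (Nat.le_of_dvd (by omega) hda).trans ha.2⟩,
        hda, hdb⟩
    · exact fun h => h.2
  rw [← sum_filter, ← hdiv, sum_totient]

end Nat

open Nat

theorem one_div_max_le_add (a b : ℕ) :
    (1 : ℝ) / (max a b : ℕ) ≤
      (if b ≤ a then (1 : ℝ) / a else 0) + if a ≤ b then (1 : ℝ) / b else 0 := by
  rcases le_total b a with h | h
  · rw [if_pos h, max_eq_left h]
    have : (0 : ℝ) ≤ if a ≤ b then (1 : ℝ) / b else 0 := by split <;> positivity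
    linarith
  · rw [if_pos h, max_eq_right h]
    have : (0 : ℝ) ≤ if b ≤ a then (1 : ℝ) / a else 0 := by split <;> positivity
    linarith

theorem sum_Icc_ite_le_one_div_eq_one {a M : ℕ} (ha : a ∈ Icc 1 M) :
    ∑ b ∈ Icc 1 M, (if b ≤ a then (1 : ℝ) / a else 0) = 1 := by
  rw [mem_Icc] at ha
  have : {b ∈ Icc 1 M | b ≤ a} = Icc 1 a := by ext b; simp only [mem_filter, mem_Icc]; omega
  rw [← sum_filter, this, sum_const, card_Icc, nsmul_eq_mul, add_tsub_cancel_right]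
  have : (a : ℝ) ≠ 0 := by exact_mod_cast (by omega : a ≠ 0)
  field_simp

theorem sum_Icc_sum_Icc_one_div_max_le (M : ℕ) :
    ∑ a ∈ Icc 1 M, ∑ b ∈ Icc 1 M, (1 : ℝ) / (max a b : ℕ) ≤ 2 * M := by
  calc ∑ a ∈ Icc 1 M, ∑ b ∈ Icc 1 M, (1 : ℝ) / (max a b : ℕ)
      ≤ ∑ a ∈ Icc 1 M, ∑ b ∈ Icc 1 M,
          ((if b ≤ a then (1 : ℝ) / a else 0) + if a ≤ b then (1 : ℝ) / b else 0) :=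
        sum_le_sum fun a _ => sum_le_sum fun b _ => one_div_max_le_add a b
    _ = ∑ a ∈ Icc 1 M, ∑ b ∈ Icc 1 M, (if b ≤ a then (1 : ℝ) / a else 0) +
          ∑ b ∈ Icc 1 M, ∑ a ∈ Icc 1 M, (if a ≤ b then (1 : ℝ) / b else 0) := by
        simp only [sum_add_distrib]
        congr 1
        exact sum_comm
    _ = 2 * M := by
        rw [sum_congr rfl fun a ha => sum_Icc_ite_le_one_div_eq_one ha]
        simp only [sum_const, card_Icc, add_tsub_cancel_right, nsmul_eq_mul, mul_one]
        ring

theorem sum_Icc_sum_Icc_dvd_one_div_max_le {d : ℕ} (hd : 0 < d) (M : ℕ) :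
    ∑ a ∈ Icc 1 M, ∑ b ∈ Icc 1 M, (if d ∣ a ∧ d ∣ b then (1 : ℝ) / (max a b : ℕ) else 0)
      ≤ 2 * M / d ^ 2 := by
  have hfilter : ∀ a, ∑ b ∈ Icc 1 M, (if d ∣ a ∧ d ∣ b then (1 : ℝ) / (max a b : ℕ) else 0) =
      if d ∣ a then ∑ b ∈ Icc 1 M with d ∣ b, (1 : ℝ) / (max a b : ℕ) else 0 := by
    intro a
    split_ifs with h <;> simp [h, sum_filter]
  have hmax : ∀ a b : ℕ, (1 : ℝ) / (max (d * a) (d * b) : ℕ) = 1 / d * (1 / (max a b : ℕ)) := by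
    intro a b
    rw [max_mul_mul_left]
    push_cast
    rw [one_div_mul_one_div]
  calc ∑ a ∈ Icc 1 M, ∑ b ∈ Icc 1 M, (if d ∣ a ∧ d ∣ b then (1 : ℝ) / (max a b : ℕ) else 0)
      = 1 / d * ∑ a ∈ Icc 1 (M / d), ∑ b ∈ Icc 1 (M / d), (1 : ℝ) / (max a b : ℕ) := by
        simp only [hfilter, ← sum_filter, sum_Icc_filter_dvd hd, hmax, mul_sum]
    _ ≤ 1 / d * (2 * (M / d : ℕ)) := by
        gcongr
        exact sum_Icc_sum_Icc_one_div_max_le _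
    _ ≤ 1 / d * (2 * (M / d)) := by
        gcongr
        exact Nat.cast_div_le
    _ = 2 * M / d ^ 2 := by field_simp

theorem sum_Icc_sum_Icc_gcd_div_max_le (M : ℕ) :
    ∑ a ∈ Icc 1 M, ∑ b ∈ Icc 1 M, (a.gcd b : ℝ) / (max a b : ℕ)
      ≤ 2 * M * ∑ d ∈ Icc 1 M, (φ d : ℝ) / d ^ 2 := by
  have hgcd : ∀ a ∈ Icc 1 M, ∀ b : ℕ, (a.gcd b : ℝ) / (max a b : ℕ) =
      ∑ d ∈ Icc 1 M, (φ d : ℝ) * (if d ∣ a ∧ d ∣ b then (1 : ℝ) / (max a b : ℕ) else 0) := by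
    intro a ha b
    rw [gcd_eq_sum_Icc_totient ha, cast_sum, sum_div]
    refine sum_congr rfl fun d _ => ?_
    split_ifs <;> simp [div_eq_mul_inv]
  calc ∑ a ∈ Icc 1 M, ∑ b ∈ Icc 1 M, (a.gcd b : ℝ) / (max a b : ℕ)
      = ∑ d ∈ Icc 1 M, (φ d : ℝ) * ∑ a ∈ Icc 1 M, ∑ b ∈ Icc 1 M,
          (if d ∣ a ∧ d ∣ b then (1 : ℝ) / (max a b : ℕ) else 0) := by
        rw [sum_congr rfl fun a ha => sum_congr rfl fun b _ => hgcd a ha b]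
        simp only [mul_sum]
        rw [sum_congr rfl fun _ _ => sum_comm]
        exact sum_comm
    _ ≤ ∑ d ∈ Icc 1 M, (φ d : ℝ) * (2 * M / d ^ 2) := by
        gcongr with d hd
        exact sum_Icc_sum_Icc_dvd_one_div_max_le (mem_Icc.1 hd).1 M
    _ = 2 * M * ∑ d ∈ Icc 1 M, (φ d : ℝ) / d ^ 2 := by
        rw [mul_sum]
        exact sum_congr rfl fun _ _ => by ring

theorem gcd_double_sum_le_general (A : ℝ) (hA : 2 ≤ A) :
    ∑ a1 ∈ Finset.Icc 1 ⌊A⌋₊, ∑ a2 ∈ Finset.Icc 1 ⌊A⌋₊,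
        (Nat.gcd a1 a2 : ℝ) / (max a1 a2 : ℕ)
      ≤ 2 * A * ∑ d ∈ Finset.Icc 1 ⌊A⌋₊, (Nat.totient d : ℝ) / (d : ℝ) ^ 2 := by
  refine (sum_Icc_sum_Icc_gcd_div_max_le ⌊A⌋₊).trans ?_
  gcongr
  exact Nat.floor_le (by linarith)

theorem gcd_double_sum_le (A : ℝ) (hA : 2 ≤ A) (N : ℕ) (hN : 2 ≤ N) :
    ∑ a1 ∈ Finset.Icc 1 ⌊A⌋₊, ∑ a2 ∈ Finset.Icc 1 ⌊A⌋₊,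
        (Nat.gcd a1 a2 : ℝ) / (max a1 a2 : ℕ)
      ≤ 2 * A * ∑ d ∈ Finset.Icc 1 ⌊A⌋₊, (Nat.totient d : ℝ) / (d : ℝ) ^ 2 :=
  gcd_double_sum_le_general A hA
end
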